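/- arXiv:0811.0947 — 4 statements merged into one kernel-verified Lean document; each statement's English description precedes it below -/
import Mathlib

section
/- Let E be a unital quantum channel (E(I) = I, trace-preserving, completely positive) on M_n. Then for every a ∈ M_n in the multiplicative domain of the dual map E†, one has E(E†(a)) = a. Consequently MD(E†) is contained in the fixed-point set of E∘E†. -/
open Matrix Finset

lemma sum_conjTranspose_mul_self_eq_zero {n m : ℕ}
    (A : Fin m → Matrix (Fin n) (Fin n) ℂ)
    (h : ∑ i, (A i)ᴴ * A i = 0) : ∀ i, A i = 0 := by
  have htr : ∑ i, (∑ j, ∑ k, Complex.normSq (A i k j)) = 0 := by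
    have := congrArg Matrix.trace h
    rw [Matrix.trace_sum, Matrix.trace_zero] at this
    have h2 : ∀ i, Matrix.trace ((A i)ᴴ * A i)
        = ((∑ j, ∑ k, Complex.normSq (A i k j) : ℝ) : ℂ) := by
      intro i
      simp only [Matrix.trace, Matrix.diag, Matrix.mul_apply, Matrix.conjTranspose_apply,
        Complex.ofReal_sum]
      congr 1; ext j; congr 1; ext k
      rw [Complex.normSq_eq_conj_mul_self]
      rfl
    rw [Finset.sum_congr rfl (fun i _ => h2 i)] at this
    exact_mod_cast this
  intro i
  ext k j
  have h1 : ∀ i ∈ (univ : Finset (Fin m)), 0 ≤ ∑ j, ∑ k, Complex.normSq (A i k j) := by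
    intro i _
    exact Finset.sum_nonneg fun j _ => Finset.sum_nonneg fun k _ => Complex.normSq_nonneg _
  have := (Finset.sum_eq_zero_iff_of_nonneg h1).mp htr i (mem_univ i)
  have h3 : ∀ j ∈ (univ : Finset (Fin n)), 0 ≤ ∑ k, Complex.normSq (A i k j) := by
    intro j _; exact Finset.sum_nonneg fun k _ => Complex.normSq_nonneg _
  have := (Finset.sum_eq_zero_iff_of_nonneg h3).mp this j (mem_univ j)
  have h4 : ∀ k ∈ (univ : Finset (Fin n)), 0 ≤ Complex.normSq (A i k j) := by
    intro k _; exact Complex.normSq_nonneg _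
  have := (Finset.sum_eq_zero_iff_of_nonneg h4).mp this k (mem_univ k)
  simpa using Complex.normSq_eq_zero.mp this

/-- The multiplicative domain of a map `Φ` on a matrix algebra. -/
def multDomain {n : ℕ} (Φ : Matrix (Fin n) (Fin n) ℂ → Matrix (Fin n) (Fin n) ℂ) :
    Set (Matrix (Fin n) (Fin n) ℂ) :=
  {a | ∀ b, Φ a * Φ b = Φ (a * b) ∧ Φ b * Φ a = Φ (b * a)}

/-- For a unital quantum channel `E` with dual `E†`, every element of the multiplicative
domain of `E†` satisfies `E(E†(a)) = a`; i.e. `MD(E†)` lies in the fixed-point set of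
`E ∘ E†`. -/
theorem multDomain_dual_subset_fixedPoints {n m : ℕ}
    (K : Fin m → Matrix (Fin n) (Fin n) ℂ)
    (hTP : ∑ i, (K i)ᴴ * K i = 1)
    (hUnital : ∑ i, K i * (K i)ᴴ = 1) :
    ∀ a ∈ multDomain (fun X => ∑ i, (K i)ᴴ * X * K i),
      (∑ i, K i * (∑ j, (K j)ᴴ * a * K j) * (K i)ᴴ) = a := by
  intro a ha
  set Φ : Matrix (Fin n) (Fin n) ℂ → Matrix (Fin n) (Fin n) ℂ :=
    fun X => ∑ i, (K i)ᴴ * X * K i with hΦ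
  have hΦstar : (Φ a)ᴴ = Φ aᴴ := by
    simp [hΦ, Matrix.conjTranspose_sum, Matrix.conjTranspose_mul, mul_assoc]
  -- key: Φ(aᴴ) * Φ(a) = Φ(aᴴ * a)
  have hkey : Φ aᴴ * Φ a = Φ (aᴴ * a) := (ha aᴴ).2
  -- show ∑ (K i * Φ a - a * K i)ᴴ * (K i * Φ a - a * K i) = 0
  have hzero : ∑ i, (K i * Φ a - a * K i)ᴴ * (K i * Φ a - a * K i) = 0 := by
    have expand : ∀ i : Fin m, (K i * Φ a - a * K i)ᴴ * (K i * Φ a - a * K i)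
        = (Φ a)ᴴ * ((K i)ᴴ * K i) * Φ a - (Φ a)ᴴ * ((K i)ᴴ * a * K i)
          - (K i)ᴴ * aᴴ * K i * Φ a + (K i)ᴴ * (aᴴ * a) * K i := by
      intro i
      simp only [Matrix.conjTranspose_sub, Matrix.conjTranspose_mul]
      noncomm_ring
    rw [Finset.sum_congr rfl (fun i _ => expand i)]
    simp only [Finset.sum_add_distrib, Finset.sum_sub_distrib]
    have e1 : ∑ x, (Φ a)ᴴ * ((K x)ᴴ * K x) * Φ a = (Φ a)ᴴ * Φ a := by
      rw [← Finset.sum_mul, ← Finset.mul_sum, hTP, mul_one]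
    have e2 : ∑ x, (Φ a)ᴴ * ((K x)ᴴ * a * K x) = (Φ a)ᴴ * Φ a := by
      rw [← Finset.mul_sum]
    have e3 : ∑ x, (K x)ᴴ * aᴴ * K x * Φ a = Φ aᴴ * Φ a := by
      rw [← Finset.sum_mul]
    have e4 : ∑ x, (K x)ᴴ * (aᴴ * a) * K x = Φ (aᴴ * a) := rfl
    rw [e1, e2, e3, e4, hΦstar, ← hkey]
    abel
  have hcomm : ∀ i, K i * Φ a = a * K i := by
    intro i
    have := sum_conjTranspose_mul_self_eq_zero (fun i => K i * Φ a - a * K i) hzero i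
    linear_combination (norm := noncomm_ring) this
  calc ∑ i, K i * Φ a * (K i)ᴴ = ∑ i, a * (K i * (K i)ᴴ) := by
        refine Finset.sum_congr rfl fun i _ => ?_
        rw [hcomm i, mul_assoc]
    _ = a := by rw [← Finset.mul_sum, hUnital, mul_one]
end

section
/- Let E be a unital quantum channel on M_n with Kraus operators {E_i}. Then the fixed point set of E†∘E equals the commutant {ρ ∈ M_n : [ρ, E_i†E_j] = 0 for all i,j}. -/
/-!
With `A_{ij} = E_i† E_j`, the map `E† ∘ E` is the Kraus map `ρ ↦ Σ A_{ij} ρ A_{ij}†`; it is unital,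
and self-dual because `A_{ij}† = A_{ji}`. For a Kraus family `{A_k}` that is both unital and
trace-preserving, expanding the squares gives
`Σ_k tr([ρ, A_k] [ρ, A_k]†) = 2 tr(ρ ρ†) - tr(Φ(ρ) ρ†) - tr(Φ†(ρ) ρ†)`,
so a common fixed point of `Φ` and `Φ†` commutes with every `A_k`, each term being a nonnegative
squared Frobenius norm. Conversely, `Σ_k A_k A_k† = 1` makes every element of the commutant fixed.
-/

open Matrix Finset
open scoped ComplexOrder

section KrausMap

variable {ι κ n R : Type*} [Fintype ι] [Fintype κ] [Fintype n]

section Semiring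

variable [Semiring R] [StarRing R]

def krausMap (A : ι → Matrix n n R) (X : Matrix n n R) : Matrix n n R :=
  ∑ k, A k * X * (A k)ᴴ

theorem krausMap_krausMap (A : ι → Matrix n n R) (B : κ → Matrix n n R) (X : Matrix n n R) :
    krausMap B (krausMap A X) = krausMap (fun p : κ × ι => B p.1 * A p.2) X := by
  simp only [krausMap, Fintype.sum_prod_type, mul_sum, sum_mul, conjTranspose_mul, mul_assoc]

theorem krausMap_conjTranspose_of_equiv (A : ι → Matrix n n R) (e : ι ≃ ι)
    (he : ∀ k, (A k)ᴴ = A (e k)) :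
    krausMap (fun k => (A k)ᴴ) = krausMap A := by
  funext X
  have he' : ∀ k, A k = (A (e k))ᴴ := fun k => by rw [← he, conjTranspose_conjTranspose]
  simp only [krausMap, conjTranspose_conjTranspose]
  conv_lhs => enter [2, k]; rw [he k, he' k]
  exact e.sum_comp fun k => A k * X * (A k)ᴴ

theorem krausMap_eq_self_of_commute [DecidableEq n] {A : ι → Matrix n n R}
    (hA : krausMap A 1 = 1) {ρ : Matrix n n R} (hρ : ∀ k, Commute ρ (A k)) : krausMap A ρ = ρ := by
  calc krausMap A ρ = ρ * krausMap A 1 := by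
        simp only [krausMap, mul_sum, mul_one, ← mul_assoc, (hρ _).eq]
    _ = ρ := by rw [hA, mul_one]

end Semiring

variable [CommRing R] [StarRing R] [DecidableEq n]

theorem sum_trace_commutator_mul_conjTranspose {A : ι → Matrix n n R} (hA : krausMap A 1 = 1)
    (hA' : krausMap (fun k => (A k)ᴴ) 1 = 1) (ρ : Matrix n n R) :
    ∑ k, trace ((ρ * A k - A k * ρ) * (ρ * A k - A k * ρ)ᴴ) =
      2 * trace (ρ * ρᴴ) - trace (krausMap A ρ * ρᴴ) -
        trace (krausMap (fun k => (A k)ᴴ) ρ * ρᴴ) := by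
  have hexpand : ∀ k, trace ((ρ * A k - A k * ρ) * (ρ * A k - A k * ρ)ᴴ) =
      trace (ρ * (A k * (A k)ᴴ) * ρᴴ) + trace ((A k)ᴴ * A k * (ρ * ρᴴ))
        - trace (A k * ρ * (A k)ᴴ * ρᴴ) - trace ((A k)ᴴ * ρ * A k * ρᴴ) := by
    intro k
    have hprod : (ρ * A k - A k * ρ) * (ρ * A k - A k * ρ)ᴴ =
        ρ * (A k * (A k)ᴴ) * ρᴴ + A k * (ρ * ρᴴ) * (A k)ᴴ
          - A k * ρ * (A k)ᴴ * ρᴴ - ρ * A k * ρᴴ * (A k)ᴴ := by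
      simp only [conjTranspose_sub, conjTranspose_mul]
      noncomm_ring
    rw [hprod, trace_sub, trace_sub, trace_add, trace_mul_cycle (A k), trace_mul_comm _ (A k)ᴴ]
    simp only [mul_assoc]
  simp only [krausMap, mul_one, conjTranspose_conjTranspose] at hA hA' ⊢
  simp only [hexpand, sum_sub_distrib, sum_add_distrib, ← trace_sum, ← sum_mul, ← mul_sum, hA, hA']
  rw [mul_one, one_mul]
  ring

theorem commute_of_krausMap_eq_self [PartialOrder R] [StarOrderedRing R] [NoZeroDivisors R]
    {A : ι → Matrix n n R} (hA : krausMap A 1 = 1) (hA' : krausMap (fun k => (A k)ᴴ) 1 = 1)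
    {ρ : Matrix n n R} (hρ : krausMap A ρ = ρ) (hρ' : krausMap (fun k => (A k)ᴴ) ρ = ρ) (k : ι) :
    Commute ρ (A k) := by
  have hsum : ∑ k, trace ((ρ * A k - A k * ρ) * (ρ * A k - A k * ρ)ᴴ) = 0 := by
    rw [sum_trace_commutator_mul_conjTranspose hA hA', hρ, hρ']
    ring
  have hnonneg : ∀ k, 0 ≤ trace ((ρ * A k - A k * ρ) * (ρ * A k - A k * ρ)ᴴ) :=
    fun k => (posSemidef_self_mul_conjTranspose _).trace_nonneg
  have hk := (sum_eq_zero_iff_of_nonneg fun k _ => hnonneg k).mp hsum k (mem_univ k)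
  exact sub_eq_zero.mp (trace_mul_conjTranspose_self_eq_zero_iff.mp hk)

end KrausMap

/-- For a unital quantum channel `E ≡ {E_i}`, the fixed-point set of `E† ∘ E` equals the
commutant `{ρ : [ρ, E_i† E_j] = 0 for all i, j}`. -/
theorem fixedPoints_dual_comp_eq_commutant {n m : ℕ}
    (K : Fin m → Matrix (Fin n) (Fin n) ℂ)
    (hTP : ∑ i, (K i)ᴴ * K i = 1)
    (hUnital : ∑ i, K i * (K i)ᴴ = 1) :
    {ρ : Matrix (Fin n) (Fin n) ℂ |
        ∑ i, (K i)ᴴ * (∑ j, K j * ρ * (K j)ᴴ) * K i = ρ} =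
    {ρ : Matrix (Fin n) (Fin n) ℂ |
        ∀ i j, ρ * ((K i)ᴴ * K j) = ((K i)ᴴ * K j) * ρ} := by
  set A : Fin m × Fin m → Matrix (Fin n) (Fin n) ℂ := fun p => (K p.1)ᴴ * K p.2
  have hcomp : ∀ X, ∑ i, (K i)ᴴ * (∑ j, K j * X * (K j)ᴴ) * K i = krausMap A X := fun X => by
    simpa only [krausMap, conjTranspose_conjTranspose] using krausMap_krausMap K (fun i => (K i)ᴴ) X
  have hdual : krausMap (fun p => (A p)ᴴ) = krausMap A :=
    krausMap_conjTranspose_of_equiv A (Equiv.prodComm _ _) fun p => by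
      simp [A, conjTranspose_mul]
  have hunital : krausMap A 1 = 1 := by
    rw [← hcomp]
    simp only [mul_one, hUnital, hTP]
  ext ρ
  simp only [Set.mem_ofPred_eq, hcomp]
  constructor
  · intro hρ i j
    refine commute_of_krausMap_eq_self hunital ?_ hρ ?_ (i, j) <;> rwa [hdual]
  · intro hρ
    exact krausMap_eq_self_of_commute hunital fun p => hρ p.1 p.2
end

section
/- Let E be a unital quantum channel on M_n. Then the multiplicative domain of E equals the fixed-point algebra of E†∘E, i.e., MD(E) = {ρ : E†(E(ρ)) = ρ}. -/
open Matrix Finset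

variable {n m : ℕ}

private lemma aux_zero (W : Fin m → Matrix (Fin n) (Fin n) ℂ)
    (h : ∑ i, Matrix.trace ((W i)ᴴ * W i) = 0) : ∀ i, W i = 0 := by
  have key : ∑ i, ∑ j, ∑ k, Complex.normSq (W i k j) = 0 := by
    have h2 : ∑ i, ∑ j, ∑ k, ((Complex.normSq (W i k j) : ℂ)) = 0 := by
      rw [← h]
      refine Finset.sum_congr rfl fun i _ => ?_
      simp only [Matrix.trace, Matrix.diag, Matrix.mul_apply, Matrix.conjTranspose_apply]
      refine Finset.sum_congr rfl fun j _ => Finset.sum_congr rfl fun k _ => ?_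
      rw [mul_comm, Complex.star_def, Complex.mul_conj]
    exact_mod_cast h2
  have hnn : ∀ i j k, Complex.normSq (W i k j) = 0 := by
    intro i j k
    have h1 := (Finset.sum_eq_zero_iff_of_nonneg (fun i _ =>
      Finset.sum_nonneg fun j _ => Finset.sum_nonneg fun k _ =>
        Complex.normSq_nonneg _)).mp key i (Finset.mem_univ i)
    have h2 := (Finset.sum_eq_zero_iff_of_nonneg (fun j _ =>
      Finset.sum_nonneg fun k _ => Complex.normSq_nonneg _)).mp h1 j (Finset.mem_univ j)
    exact (Finset.sum_eq_zero_iff_of_nonneg (fun k _ =>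
      Complex.normSq_nonneg _)).mp h2 k (Finset.mem_univ k)
  intro i
  ext k j
  simpa using Complex.normSq_eq_zero.mp (hnn i j k)

private lemma sumKrausH (K : Fin m → Matrix (Fin n) (Fin n) ℂ)
    (x : Matrix (Fin n) (Fin n) ℂ) :
    (∑ i, K i * x * (K i)ᴴ)ᴴ = ∑ i, K i * xᴴ * (K i)ᴴ := by
  rw [Matrix.conjTranspose_sum]
  refine Finset.sum_congr rfl fun i _ => ?_
  simp [Matrix.conjTranspose_mul, mul_assoc]

private lemma identityA (K : Fin m → Matrix (Fin n) (Fin n) ℂ)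
    (hUnital : ∑ i, K i * (K i)ᴴ = 1) (x : Matrix (Fin n) (Fin n) ℂ) :
    ∑ i, (x * (K i)ᴴ - (K i)ᴴ * (∑ j, K j * x * (K j)ᴴ))ᴴ *
         (x * (K i)ᴴ - (K i)ᴴ * (∑ j, K j * x * (K j)ᴴ)) =
    (∑ i, K i * (xᴴ * x) * (K i)ᴴ) -
      (∑ i, K i * x * (K i)ᴴ)ᴴ * (∑ i, K i * x * (K i)ᴴ) := by
  set e := ∑ j, K j * x * (K j)ᴴ with he
  have heH : eᴴ = ∑ j, K j * xᴴ * (K j)ᴴ := sumKrausH K x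
  have expand : ∀ i, (x * (K i)ᴴ - (K i)ᴴ * e)ᴴ * (x * (K i)ᴴ - (K i)ᴴ * e) =
      K i * (xᴴ * x) * (K i)ᴴ - (K i * xᴴ * (K i)ᴴ) * e - eᴴ * (K i * x * (K i)ᴴ)
        + eᴴ * (K i * (K i)ᴴ) * e := by
    intro i
    simp only [Matrix.conjTranspose_sub, Matrix.conjTranspose_mul,
      Matrix.conjTranspose_conjTranspose]
    noncomm_ring
  calc ∑ i, (x * (K i)ᴴ - (K i)ᴴ * e)ᴴ * (x * (K i)ᴴ - (K i)ᴴ * e)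
      = ∑ i, (K i * (xᴴ * x) * (K i)ᴴ - (K i * xᴴ * (K i)ᴴ) * e
          - eᴴ * (K i * x * (K i)ᴴ) + eᴴ * (K i * (K i)ᴴ) * e) :=
        Finset.sum_congr rfl fun i _ => expand i
    _ = (∑ i, K i * (xᴴ * x) * (K i)ᴴ) - (∑ i, K i * xᴴ * (K i)ᴴ) * e
          - eᴴ * (∑ i, K i * x * (K i)ᴴ) + eᴴ * (∑ i, K i * (K i)ᴴ) * e := by
        simp only [Finset.sum_add_distrib, Finset.sum_sub_distrib, Finset.sum_mul,
          Finset.mul_sum, mul_assoc]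
    _ = (∑ i, K i * (xᴴ * x) * (K i)ᴴ) - eᴴ * e := by
        rw [hUnital, ← heH, ← he, mul_one]
        abel

private lemma traceE (K : Fin m → Matrix (Fin n) (Fin n) ℂ)
    (hTP : ∑ i, (K i)ᴴ * K i = 1) (x : Matrix (Fin n) (Fin n) ℂ) :
    Matrix.trace (∑ i, K i * x * (K i)ᴴ) = Matrix.trace x := by
  rw [Matrix.trace_sum]
  calc ∑ i, Matrix.trace (K i * x * (K i)ᴴ)
      = ∑ i, Matrix.trace ((K i)ᴴ * K i * x) := by
        refine Finset.sum_congr rfl fun i _ => ?_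
        rw [Matrix.trace_mul_comm (K i * x) ((K i)ᴴ), mul_assoc]
    _ = Matrix.trace ((∑ i, (K i)ᴴ * K i) * x) := by
        rw [Finset.sum_mul, Matrix.trace_sum]
    _ = Matrix.trace x := by rw [hTP, one_mul]

private lemma traceAdj (K : Fin m → Matrix (Fin n) (Fin n) ℂ)
    (a b : Matrix (Fin n) (Fin n) ℂ) :
    Matrix.trace ((∑ i, K i * a * (K i)ᴴ) * b) =
      Matrix.trace (a * ∑ i, (K i)ᴴ * b * K i) := by
  rw [Finset.sum_mul, Matrix.trace_sum, Finset.mul_sum, Matrix.trace_sum]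
  refine Finset.sum_congr rfl fun i _ => ?_
  rw [Matrix.trace_mul_comm]
  rw [show b * (K i * a * (K i)ᴴ) = (b * K i * a) * (K i)ᴴ by noncomm_ring,
    Matrix.trace_mul_comm,
    show (K i)ᴴ * (b * K i * a) = ((K i)ᴴ * b * K i) * a by noncomm_ring,
    Matrix.trace_mul_comm]

private lemma fixed_implies_comm (K : Fin m → Matrix (Fin n) (Fin n) ℂ)
    (hTP : ∑ i, (K i)ᴴ * K i = 1)
    (ρ : Matrix (Fin n) (Fin n) ℂ)
    (hUnital : ∑ i, K i * (K i)ᴴ = 1)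
    (hfix : ∑ i, (K i)ᴴ * (∑ j, K j * ρ * (K j)ᴴ) * K i = ρ) :
    ∀ i, ρ * (K i)ᴴ = (K i)ᴴ * (∑ j, K j * ρ * (K j)ᴴ) := by
  have htr : ∑ i, Matrix.trace ((ρ * (K i)ᴴ - (K i)ᴴ * (∑ j, K j * ρ * (K j)ᴴ))ᴴ *
      (ρ * (K i)ᴴ - (K i)ᴴ * (∑ j, K j * ρ * (K j)ᴴ))) = 0 := by
    rw [← Matrix.trace_sum, identityA K hUnital ρ, Matrix.trace_sub,
      traceE K hTP, sumKrausH K ρ, traceAdj K ρᴴ]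
    have : ∑ i, (K i)ᴴ * (∑ j, K j * ρ * (K j)ᴴ) * K i = ρ := hfix
    rw [this, sub_self]
  intro i
  exact sub_eq_zero.mp (aux_zero _ htr i)

/-- For a unital quantum channel `E`, the multiplicative domain of `E` equals the
fixed-point algebra of `E† ∘ E` (the UCC algebra of `E`). -/
theorem multDomain_eq_fixedPoints_dual_comp {n m : ℕ}
    (K : Fin m → Matrix (Fin n) (Fin n) ℂ)
    (hTP : ∑ i, (K i)ᴴ * K i = 1)
    (hUnital : ∑ i, K i * (K i)ᴴ = 1) :
    multDomain (fun X => ∑ i, K i * X * (K i)ᴴ) =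
    {ρ : Matrix (Fin n) (Fin n) ℂ |
        ∑ i, (K i)ᴴ * (∑ j, K j * ρ * (K j)ᴴ) * K i = ρ} := by
  ext ρ
  simp only [multDomain, Set.mem_setOf_eq]
  constructor
  · intro h
    have hmul := (h ρᴴ).2
    have hzero : ∑ i, (ρ * (K i)ᴴ - (K i)ᴴ * (∑ j, K j * ρ * (K j)ᴴ))ᴴ *
        (ρ * (K i)ᴴ - (K i)ᴴ * (∑ j, K j * ρ * (K j)ᴴ)) = 0 := by
      rw [identityA K hUnital ρ, sumKrausH K ρ, hmul, sub_self]
    have hcomm : ∀ i, ρ * (K i)ᴴ = (K i)ᴴ * (∑ j, K j * ρ * (K j)ᴴ) := fun i =>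
      sub_eq_zero.mp (aux_zero _ (by rw [← Matrix.trace_sum, hzero, Matrix.trace_zero]) i)
    calc ∑ i, (K i)ᴴ * (∑ j, K j * ρ * (K j)ᴴ) * K i
        = ∑ i, ρ * ((K i)ᴴ * K i) := by
          refine Finset.sum_congr rfl fun i _ => ?_
          rw [← hcomm i, mul_assoc]
      _ = ρ := by rw [← Finset.mul_sum, hTP, mul_one]
  · intro hfix
    have h1 := fixed_implies_comm K hTP ρ hUnital hfix
    have hfixH : ∑ i, (K i)ᴴ * (∑ j, K j * ρᴴ * (K j)ᴴ) * K i = ρᴴ := by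
      have h2 := congrArg Matrix.conjTranspose hfix
      rw [Matrix.conjTranspose_sum] at h2
      calc ∑ i, (K i)ᴴ * (∑ j, K j * ρᴴ * (K j)ᴴ) * K i
          = ∑ i, ((K i)ᴴ * (∑ j, K j * ρ * (K j)ᴴ) * K i)ᴴ := by
            refine Finset.sum_congr rfl fun i _ => ?_
            rw [Matrix.conjTranspose_mul, Matrix.conjTranspose_mul,
              Matrix.conjTranspose_conjTranspose, sumKrausH K ρ, mul_assoc]
        _ = ρᴴ := h2
    have h2 := fixed_implies_comm K hTP ρᴴ hUnital hfixH
    have h3 : ∀ i, K i * ρ = (∑ j, K j * ρ * (K j)ᴴ) * K i := by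
      intro i
      have h4 := congrArg Matrix.conjTranspose (h2 i)
      simpa [Matrix.conjTranspose_mul, sumKrausH, Matrix.conjTranspose_conjTranspose]
        using h4
    intro b
    constructor
    · rw [Finset.mul_sum]
      refine Finset.sum_congr rfl fun i _ => ?_
      rw [show K i * (ρ * b) * (K i)ᴴ = (K i * ρ) * (b * (K i)ᴴ) from by noncomm_ring,
        h3 i]
      noncomm_ring
    · rw [Finset.sum_mul]
      refine Finset.sum_congr rfl fun i _ => ?_
      rw [show K i * (b * ρ) * (K i)ᴴ = (K i * b) * (ρ * (K i)ᴴ) from by noncomm_ring,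
        h1 i]
      noncomm_ring
end

section
/- Let E be a unital quantum channel on M_n. Then E†(MD(E†)) = MD(E), i.e., the image under the dual map of the multiplicative domain of the dual equals the multiplicative domain of the original channel. -/
open Matrix Finset

lemma sum_ctms_eq_zero {n m : ℕ} {D : Fin m → Matrix (Fin n) (Fin n) ℂ}
    (h : ∑ i, (D i)ᴴ * D i = 0) (i : Fin m) : D i = 0 := by
  ext k j
  have hj : (∑ i, ∑ k, (Complex.normSq (D i k j) : ℂ)) = 0 := by
    have h0 := congrFun (congrFun h j) j
    simp only [Matrix.sum_apply, Matrix.mul_apply, Matrix.zero_apply,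
      conjTranspose_apply] at h0
    rw [← h0]
    refine Finset.sum_congr rfl fun i _ => Finset.sum_congr rfl fun k _ => ?_
    rw [Complex.normSq_eq_conj_mul_self]
    rfl
  have hr : (∑ i, ∑ k, Complex.normSq (D i k j)) = 0 := by exact_mod_cast hj
  have h1 : ∀ i ∈ Finset.univ, (∑ k, Complex.normSq (D i k j)) = 0 := by
    rw [← Finset.sum_eq_zero_iff_of_nonneg]
    · exact hr
    · intro i _
      exact Finset.sum_nonneg fun k _ => Complex.normSq_nonneg _
  have h2 : ∀ k ∈ Finset.univ, Complex.normSq (D i k j) = 0 := by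
    rw [← Finset.sum_eq_zero_iff_of_nonneg (fun k _ => Complex.normSq_nonneg _)]
    exact h1 i (Finset.mem_univ i)
  have := h2 k (Finset.mem_univ k)
  simpa using Complex.normSq_eq_zero.mp this

lemma sum_mstc_eq_zero {n m : ℕ} {D : Fin m → Matrix (Fin n) (Fin n) ℂ}
    (h : ∑ i, D i * (D i)ᴴ = 0) (i : Fin m) : D i = 0 := by
  have : ∑ i, ((D i)ᴴ)ᴴ * (D i)ᴴ = 0 := by simpa using h
  have := sum_ctms_eq_zero this i
  simpa using congrArg conjTranspose this

/-- Kraus-operator characterization (hard direction) of the multiplicative domain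
of a unital CP map. -/
lemma kraus_of_mem_multDomain {n m : ℕ} (L : Fin m → Matrix (Fin n) (Fin n) ℂ)
    (hU : ∑ i, L i * (L i)ᴴ = 1) {a : Matrix (Fin n) (Fin n) ℂ}
    (ha : a ∈ multDomain (fun X => ∑ i, L i * X * (L i)ᴴ)) (i : Fin m) :
    L i * a = (∑ j, L j * a * (L j)ᴴ) * L i ∧
      a * (L i)ᴴ = (L i)ᴴ * (∑ j, L j * a * (L j)ᴴ) := by
  set Φa : Matrix (Fin n) (Fin n) ℂ := ∑ j, L j * a * (L j)ᴴ with hΦa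
  have hconj : ∑ j, L j * aᴴ * (L j)ᴴ = Φaᴴ := by
    rw [hΦa, conjTranspose_sum]
    refine Finset.sum_congr rfl fun j _ => ?_
    simp [Matrix.conjTranspose_mul, mul_assoc]
  have h1 : Φaᴴ * Φa = ∑ j, L j * (aᴴ * a) * (L j)ᴴ := by
    have := (ha aᴴ).2
    simp only at this
    rw [← hconj]; exact this
  have h2 : Φa * Φaᴴ = ∑ j, L j * (a * aᴴ) * (L j)ᴴ := by
    have := (ha aᴴ).1
    simp only at this
    rw [← hconj]; exact this
  constructor
  · -- use C i = L i * a - Φa * L i, ∑ C i * (C i)ᴴ = Φ(a aᴴ) - Φa Φaᴴ = 0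
    have hsum : ∑ i, (L i * a - Φa * L i) * (L i * a - Φa * L i)ᴴ = 0 := by
      have expand : ∀ i : Fin m, (L i * a - Φa * L i) * (L i * a - Φa * L i)ᴴ
          = L i * (a * aᴴ) * (L i)ᴴ - (L i * a * (L i)ᴴ) * Φaᴴ
            - Φa * (L i * aᴴ * (L i)ᴴ) + Φa * (L i * (L i)ᴴ * Φaᴴ) := by
        intro i
        simp only [conjTranspose_sub, conjTranspose_mul, conjTranspose_conjTranspose]
        noncomm_ring
      rw [Finset.sum_congr rfl fun i _ => expand i]
      simp only [Finset.sum_sub_distrib, Finset.sum_add_distrib, ← Finset.sum_mul,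
        ← Finset.mul_sum]
      rw [← hΦa, hconj, hU, one_mul, h2]
      abel
    have := sum_mstc_eq_zero hsum i
    linear_combination (norm := noncomm_ring) this
  · -- use D i = a * (L i)ᴴ - (L i)ᴴ * Φa, ∑ (D i)ᴴ * D i = Φ(aᴴ a) - Φaᴴ Φa = 0
    have hsum : ∑ i, (a * (L i)ᴴ - (L i)ᴴ * Φa)ᴴ * (a * (L i)ᴴ - (L i)ᴴ * Φa) = 0 := by
      have expand : ∀ i : Fin m, (a * (L i)ᴴ - (L i)ᴴ * Φa)ᴴ * (a * (L i)ᴴ - (L i)ᴴ * Φa)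
          = L i * (aᴴ * a) * (L i)ᴴ - (L i * aᴴ * (L i)ᴴ) * Φa
            - Φaᴴ * (L i * a * (L i)ᴴ) + Φaᴴ * (L i * (L i)ᴴ * Φa) := by
        intro i
        simp only [conjTranspose_sub, conjTranspose_mul, conjTranspose_conjTranspose]
        noncomm_ring
      rw [Finset.sum_congr rfl fun i _ => expand i]
      simp only [Finset.sum_sub_distrib, Finset.sum_add_distrib, ← Finset.sum_mul,
        ← Finset.mul_sum]
      rw [← hΦa, hconj, hU, one_mul, h1]
      abel
    have := sum_ctms_eq_zero hsum i
    linear_combination (norm := noncomm_ring) this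

/-- For a unital quantum channel `E`, the image under the dual map `E†` of the
multiplicative domain of `E†` equals the multiplicative domain of `E`. -/
theorem dual_image_multDomain_dual_eq_multDomain {n m : ℕ}
    (K : Fin m → Matrix (Fin n) (Fin n) ℂ)
    (hTP : ∑ i, (K i)ᴴ * K i = 1)
    (hUnital : ∑ i, K i * (K i)ᴴ = 1) :
    (fun X => ∑ i, (K i)ᴴ * X * K i) ''
        multDomain (fun X => ∑ i, (K i)ᴴ * X * K i) =
    multDomain (fun X => ∑ i, K i * X * (K i)ᴴ) := by
  ext x
  constructor
  · rintro ⟨a, ha, rfl⟩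
    -- a ∈ MD(Ψ) with Ψ X = ∑ K iᴴ X K i
    -- use characterization with L i = (K i)ᴴ
    have ha' : a ∈ multDomain (fun X => ∑ i, (K i)ᴴ * X * ((K i)ᴴ)ᴴ) := by
      simpa using ha
    have hU' : ∑ i, (K i)ᴴ * ((K i)ᴴ)ᴴ = 1 := by simpa using hTP
    have hc := kraus_of_mem_multDomain (fun i => (K i)ᴴ) hU' ha'
    simp only [conjTranspose_conjTranspose] at hc
    show (∑ i, (K i)ᴴ * a * K i) ∈ multDomain (fun X => ∑ i, K i * X * (K i)ᴴ)
    set Ψa : Matrix (Fin n) (Fin n) ℂ := ∑ i, (K i)ᴴ * a * K i with hΨa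
    have hc1 : ∀ i, (K i)ᴴ * a = Ψa * (K i)ᴴ := fun i => (hc i).1
    have hc2 : ∀ i, a * K i = K i * Ψa := fun i => (hc i).2
    -- E(Ψa) = a
    have hE : ∑ j, K j * Ψa * (K j)ᴴ = a := by
      calc ∑ j, K j * Ψa * (K j)ᴴ = ∑ j, a * (K j * (K j)ᴴ) := by
            refine Finset.sum_congr rfl fun j _ => ?_
            rw [← hc2 j, mul_assoc]
          _ = a := by rw [← Finset.mul_sum, hUnital, mul_one]
    intro b
    constructor
    · show (∑ j, K j * Ψa * (K j)ᴴ) * (∑ j, K j * b * (K j)ᴴ) = ∑ j, K j * (Ψa * b) * (K j)ᴴ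
      rw [hE, Finset.mul_sum]
      refine Finset.sum_congr rfl fun j _ => ?_
      calc a * (K j * b * (K j)ᴴ) = (a * K j) * b * (K j)ᴴ := by noncomm_ring
        _ = (K j * Ψa) * b * (K j)ᴴ := by rw [hc2 j]
        _ = K j * (Ψa * b) * (K j)ᴴ := by noncomm_ring
    · show (∑ j, K j * b * (K j)ᴴ) * (∑ j, K j * Ψa * (K j)ᴴ) = ∑ j, K j * (b * Ψa) * (K j)ᴴ
      rw [hE, Finset.sum_mul]
      refine Finset.sum_congr rfl fun j _ => ?_
      calc K j * b * (K j)ᴴ * a = K j * b * ((K j)ᴴ * a) := by rw [mul_assoc]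
        _ = K j * b * (Ψa * (K j)ᴴ) := by rw [hc1 j]
        _ = K j * (b * Ψa) * (K j)ᴴ := by noncomm_ring
  · intro hx
    have hc := kraus_of_mem_multDomain K hUnital hx
    set Ex : Matrix (Fin n) (Fin n) ℂ := ∑ j, K j * x * (K j)ᴴ with hEx
    have hc1 : ∀ i, K i * x = Ex * K i := fun i => (hc i).1
    have hc2 : ∀ i, x * (K i)ᴴ = (K i)ᴴ * Ex := fun i => (hc i).2
    have hΨE : ∑ i, (K i)ᴴ * Ex * K i = x := by
      calc ∑ i, (K i)ᴴ * Ex * K i = ∑ i, x * ((K i)ᴴ * K i) := by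
            refine Finset.sum_congr rfl fun i _ => ?_
            rw [← mul_assoc, ← hc2 i]
          _ = x := by rw [← Finset.mul_sum, hTP, mul_one]
    refine ⟨Ex, ?_, hΨE⟩
    show Ex ∈ multDomain (fun X => ∑ i, (K i)ᴴ * X * K i)
    intro b
    constructor
    · show (∑ i, (K i)ᴴ * Ex * K i) * (∑ i, (K i)ᴴ * b * K i) = ∑ i, (K i)ᴴ * (Ex * b) * K i
      rw [hΨE, Finset.mul_sum]
      refine Finset.sum_congr rfl fun i _ => ?_
      calc x * ((K i)ᴴ * b * K i) = (x * (K i)ᴴ) * b * K i := by noncomm_ring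
        _ = ((K i)ᴴ * Ex) * b * K i := by rw [hc2 i]
        _ = (K i)ᴴ * (Ex * b) * K i := by noncomm_ring
    · show (∑ i, (K i)ᴴ * b * K i) * (∑ i, (K i)ᴴ * Ex * K i) = ∑ i, (K i)ᴴ * (b * Ex) * K i
      rw [hΨE, Finset.sum_mul]
      refine Finset.sum_congr rfl fun i _ => ?_
      calc (K i)ᴴ * b * K i * x = (K i)ᴴ * b * (K i * x) := by rw [mul_assoc]
        _ = (K i)ᴴ * b * (Ex * K i) := by rw [hc1 i]
        _ = (K i)ᴴ * (b * Ex) * K i := by noncomm_ring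
end
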